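/- arXiv:1601.04974 — 8 statements merged into one kernel-verified Lean document; each statement's English description precedes it below -/
import Mathlib

section
/- Let B = (U ∪ R, E) be a bipartite graph in which every vertex has degree at most 2. Then there exists a matching in B that covers every vertex of U if and only if B contains no maximal path that starts and ends in U (i.e., no path both of whose endpoints are in U and which cannot be extended). -/
/-! A matching covering `U` would send the `k + 1` `U`-vertices of a maximal `U`–`U` path
injectively into its `k` `R`-vertices: every neighbour of a vertex of such a path lies on it
(at the ends by maximality, inside because of the degree bound).

Conversely, induct on `|U|`. An `R`-vertex of degree 1 is matched to its unique neighbour, which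
is then deleted. If there is no such vertex, every `U`-vertex has degree 2: a path started at a
`U`-vertex of degree at most 1 could be prolonged forever, since its last vertex is never
saturated and the next `R`-vertex always has a second, fresh neighbour. Hall's condition then
follows by double counting edges. -/

/-- Degree of a vertex `u ∈ U` in the bipartite graph with parts `U`, `R`
and adjacency `E`. -/
def degU {U R : Type} [Fintype R] (E : U → R → Bool) (u : U) : ℕ :=
  (Finset.univ.filter fun r => E u r = true).card

/-- Degree of a vertex `r ∈ R`. -/
def degR {U R : Type} [Fintype U] (E : U → R → Bool) (r : R) : ℕ :=
  (Finset.univ.filter fun u => E u r = true).card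

/-- There is a maximal path in the bipartite graph both of whose endpoints lie in `U`:
a sequence `u 0, r 0, u 1, r 1, …, r (k-1), u k` of pairwise distinct vertices with
consecutive vertices adjacent, such that every neighbour of the first and of the last
vertex already lies on the path (so the path cannot be extended). -/
def HasMaxUUPath {U R : Type} (E : U → R → Bool) : Prop :=
  ∃ (k : ℕ) (u : Fin (k+1) → U) (r : Fin k → R),
    Function.Injective u ∧ Function.Injective r ∧
    (∀ i : Fin k, E (u i.castSucc) (r i) = true ∧ E (u i.succ) (r i) = true) ∧
    (∀ x : R, E (u 0) x = true → ∃ i, r i = x) ∧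
    (∀ x : R, E (u (Fin.last k)) x = true → ∃ i, r i = x)

/-- There is a matching covering every vertex of `U`. -/
def CoversU {U R : Type} (E : U → R → Bool) : Prop :=
  ∃ m : U → R, Function.Injective m ∧ ∀ u, E u (m u) = true

section

variable {U R : Type} {E : U → R → Bool}

lemma eq_of_degU_le_one [Fintype R] {u : U} {a b : R} (hd : degU E u ≤ 1)
    (ha : E u a = true) (hb : E u b = true) : a = b :=
  Finset.card_le_one.mp hd a (by simp [ha]) b (by simp [hb])

lemma eq_or_eq_of_degU_le_two [Fintype R] {u : U} {a b x : R} (hd : degU E u ≤ 2)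
    (ha : E u a = true) (hb : E u b = true) (hab : a ≠ b) (hx : E u x = true) :
    x = a ∨ x = b := by
  classical
  by_contra! hxab
  have hsub : ({a, b, x} : Finset R) ⊆ Finset.univ.filter fun r => E u r = true := by
    intro y hy
    simp only [Finset.mem_insert, Finset.mem_singleton] at hy
    rcases hy with rfl | rfl | rfl <;> simp [*]
  have hcard := Finset.card_le_card hsub
  rw [Finset.card_eq_three.mpr ⟨a, b, x, hab, hxab.1.symm, hxab.2.symm, rfl⟩] at hcard
  unfold degU at hd
  omega

lemma exists_ne_adj_of_one_lt_degR [Fintype U] {x : R} (hd : 1 < degR E x) (u : U) :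
    ∃ v, E v x = true ∧ v ≠ u := by
  obtain ⟨v, hv, hvu⟩ := Finset.exists_mem_ne hd u
  exact ⟨v, (Finset.mem_filter.mp hv).2, hvu⟩

lemma degR_comp_le [Fintype U] {U' : Type} [Fintype U'] {f : U' → U}
    (hf : Function.Injective f) (r : R) : degR (fun u => E (f u)) r ≤ degR E r :=
  Finset.card_le_card_of_injOn f (fun u hu => by simpa using hu) hf.injOn

lemma HasMaxUUPath.of_comp {U' : Type} {f : U' → U} (hf : Function.Injective f)
    (h : HasMaxUUPath fun u => E (f u)) : HasMaxUUPath E := by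
  obtain ⟨k, u, r, hu, hr, hadj, h0, hl⟩ := h
  exact ⟨k, f ∘ u, r, hf.comp hu, hr, hadj, h0, hl⟩

structure IsUUPath (E : U → R → Bool) (k : ℕ) (u : Fin (k + 1) → U) (r : Fin k → R) : Prop where
  injective_u : Function.Injective u
  injective_r : Function.Injective r
  adj : ∀ i : Fin k, E (u i.castSucc) (r i) = true ∧ E (u i.succ) (r i) = true

namespace IsUUPath

variable {k : ℕ} {u : Fin (k + 1) → U} {r : Fin k → R}

lemma hasMaxUUPath (hp : IsUUPath E k u r) (h0 : ∀ x, E (u 0) x = true → ∃ i, r i = x)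
    (hl : ∀ x, E (u (Fin.last k)) x = true → ∃ i, r i = x) : HasMaxUUPath E :=
  ⟨k, u, r, hp.injective_u, hp.injective_r, hp.adj, h0, hl⟩

lemma single (v : U) : IsUUPath E 0 (fun _ => v) Fin.elim0 :=
  ⟨fun a b _ => Subsingleton.elim (α := Fin 1) a b, Function.injective_of_subsingleton _,
    fun i => i.elim0⟩

lemma snoc (hp : IsUUPath E k u r) {x : R} {v : U} (hx : E (u (Fin.last k)) x = true)
    (hv : E v x = true) (hxr : x ∉ Set.range r) (hvu : v ∉ Set.range u) :
    IsUUPath E (k + 1) (Fin.snoc u v) (Fin.snoc r x) where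
  injective_u := Fin.snoc_injective_of_injective hp.injective_u hvu
  injective_r := Fin.snoc_injective_of_injective hp.injective_r hxr
  adj i := by
    induction i using Fin.lastCases with
    | last => simpa [Fin.succ_last] using ⟨hx, hv⟩
    | cast i =>
      rw [Fin.succ_castSucc, Fin.snoc_castSucc, Fin.snoc_castSucc, Fin.snoc_castSucc]
      exact hp.adj i

lemma exists_eq_of_adj [Fintype R] (hU : ∀ v, degU E v ≤ 2) (hp : IsUUPath E k u r)
    {j : Fin (k + 1)} (hj0 : j ≠ 0) (hjl : j ≠ Fin.last k) {x : R} (hx : E (u j) x = true) :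
    ∃ i, r i = x := by
  obtain ⟨i, rfl⟩ := Fin.exists_castSucc_eq.mpr hjl
  obtain ⟨i', hi'⟩ := Fin.exists_succ_eq.mpr hj0
  have hne : r i' ≠ r i := hp.injective_r.ne fun h => by
    subst h; exact Fin.castSucc_lt_succ.ne' hi'
  have hadj' : E (u i.castSucc) (r i') = true := hi' ▸ (hp.adj i').2
  rcases eq_or_eq_of_degU_le_two (hU _) hadj' (hp.adj i).1 hne hx with h | h
  exacts [⟨i', h.symm⟩, ⟨i, h.symm⟩]

end IsUUPath

lemma not_hasMaxUUPath_of_coversU [Fintype R] (hU : ∀ u, degU E u ≤ 2) (hC : CoversU E) :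
    ¬ HasMaxUUPath E := by
  rintro ⟨k, u, r, hu, hr, hadj, h0, hl⟩
  obtain ⟨m, hm, hmE⟩ := hC
  have hp : IsUUPath E k u r := ⟨hu, hr, hadj⟩
  have hmatched : ∀ j, ∃ i, r i = m (u j) := by
    intro j
    by_cases hj0 : j = 0
    · exact h0 _ (hj0 ▸ hmE (u j))
    by_cases hjl : j = Fin.last k
    · exact hl _ (hjl ▸ hmE (u j))
    exact hp.exists_eq_of_adj hU hj0 hjl (hmE (u j))
  choose g hg using hmatched
  have hg_inj : Function.Injective g := fun a b hab =>
    hu (hm (by rw [← hg a, ← hg b, hab]))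
  simpa using Fintype.card_le_of_injective g hg_inj

lemma IsUUPath.exists_snoc [Fintype U] [Fintype R] (hU : ∀ u, degU E u ≤ 2)
    (hR1 : ∀ x, degR E x ≠ 1) (hP : ¬ HasMaxUUPath E) {k : ℕ} {u : Fin (k + 1) → U}
    {r : Fin k → R} (hp : IsUUPath E k u r) (h0 : degU E (u 0) ≤ 1) :
    ∃ (u' : Fin (k + 2) → U) (r' : Fin (k + 1) → R), IsUUPath E (k + 1) u' r' ∧ u' 0 = u 0 := by
  have hsat : ∀ j ≠ Fin.last k, ∀ x, E (u j) x = true → ∃ i, r i = x := by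
    intro j hjl x hx
    by_cases hj0 : j = 0
    · subst hj0
      obtain ⟨i, hi⟩ := Fin.exists_castSucc_eq.mpr hjl
      exact ⟨i, eq_of_degU_le_one h0 (hi ▸ (hp.adj i).1) hx⟩
    · exact hp.exists_eq_of_adj hU hj0 hjl hx
  obtain ⟨x, hx, hxr⟩ : ∃ x, E (u (Fin.last k)) x = true ∧ x ∉ Set.range r := by
    by_contra! hl
    refine hP (hp.hasMaxUUPath (fun x hx => ?_) hl)
    by_cases h : (0 : Fin (k + 1)) = Fin.last k
    · exact hl x (h ▸ hx)
    · exact hsat 0 h x hx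
  have hx_deg : 1 < degR E x := by
    have : 0 < degR E x := Finset.card_pos.mpr ⟨u (Fin.last k), by simp [hx]⟩
    have := hR1 x
    omega
  obtain ⟨v, hv, hv_last⟩ := exists_ne_adj_of_one_lt_degR hx_deg (u (Fin.last k))
  have hvu : v ∉ Set.range u := by
    rintro ⟨j, rfl⟩
    exact hxr (hsat j (fun h => hv_last (h ▸ rfl)) x hv)
  refine ⟨_, _, hp.snoc hx hv hxr hvu, ?_⟩
  rw [← Fin.castSucc_zero, Fin.snoc_castSucc]

lemma two_le_degU_of_not_hasMaxUUPath [Fintype U] [Fintype R] (hU : ∀ u, degU E u ≤ 2)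
    (hR1 : ∀ x, degR E x ≠ 1) (hP : ¬ HasMaxUUPath E) (v : U) : 2 ≤ degU E v := by
  by_contra! hv
  have hpaths : ∀ n, ∃ (u : Fin (n + 1) → U) (r : Fin n → R), IsUUPath E n u r ∧ u 0 = v := by
    intro n
    induction n with
    | zero => exact ⟨_, _, IsUUPath.single v, rfl⟩
    | succ n ih =>
      obtain ⟨u, r, hp, hu0⟩ := ih
      obtain ⟨u', r', hp', hu'0⟩ := hp.exists_snoc hU hR1 hP (hu0 ▸ Nat.le_of_lt_succ hv)
      exact ⟨u', r', hp', hu'0.trans hu0⟩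
  obtain ⟨_, r, hp, -⟩ := hpaths (Fintype.card R + 1)
  simpa using Fintype.card_le_of_injective r hp.injective_r

lemma coversU_of_degR_le_of_le_degU [Fintype U] [Fintype R] {d : ℕ} (hd : 0 < d)
    (hU : ∀ u, d ≤ degU E u) (hR : ∀ r, degR E r ≤ d) : CoversU E := by
  classical
  refine (Fintype.all_card_le_filter_rel_iff_exists_injective fun u r => E u r = true).mp
    fun A => Nat.le_of_mul_le_mul_right ?_ hd
  refine Finset.card_mul_le_card_mul (fun u r => E u r = true)
    (fun a ha => (hU a).trans (Finset.card_le_card fun b hb => ?_))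
    (fun b _ => (Finset.card_le_card ?_).trans (hR b))
  · simp only [Finset.mem_filter, Finset.mem_univ, true_and] at hb
    simpa [Finset.bipartiteAbove, hb] using ⟨a, ha, hb⟩
  · exact Finset.filter_subset_filter _ (Finset.subset_univ A)

lemma CoversU.of_subtype_ne {u₀ : U} {r₀ : R} (h₀ : E u₀ r₀ = true)
    (huniq : ∀ u, E u r₀ = true → u = u₀) (h : CoversU fun u : {u // u ≠ u₀} => E u) :
    CoversU E := by
  classical
  obtain ⟨m, hm, hmE⟩ := h
  have hm₀ : ∀ u, m u ≠ r₀ := fun u h => u.2 (huniq u (h ▸ hmE u))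
  refine ⟨_, Function.Injective.dite (· = u₀) (f := fun _ => r₀)
    (fun a b _ => Subtype.ext (a.2.trans b.2.symm)) hm fun h => hm₀ _ h.symm, fun u => ?_⟩
  by_cases hu : u = u₀
  · simpa [hu] using h₀
  · simpa [hu] using hmE ⟨u, hu⟩

theorem coversU_of_not_hasMaxUUPath [Fintype U] [Fintype R] (hU : ∀ u, degU E u ≤ 2)
    (hR : ∀ r, degR E r ≤ 2) (hP : ¬ HasMaxUUPath E) : CoversU E := by
  induction hn : Fintype.card U using Nat.strong_induction_on generalizing U with
  | _ n ih =>
    by_cases hR1 : ∃ r₀, degR E r₀ = 1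
    · classical
      obtain ⟨r₀, hr₀⟩ := hR1
      obtain ⟨u₀, hu₀⟩ := Finset.card_eq_one.mp hr₀
      have hnbr : ∀ u, E u r₀ = true ↔ u = u₀ := fun u => by
        simpa using Finset.ext_iff.mp hu₀ u
      have hcard : Fintype.card {u // u ≠ u₀} < n :=
        hn ▸ Fintype.card_subtype_lt (p := (· ≠ u₀)) (not_not.mpr rfl)
      exact CoversU.of_subtype_ne ((hnbr u₀).mpr rfl) (fun u => (hnbr u).mp) (ih _ hcard
        (fun u => hU u) (fun r => (degR_comp_le Subtype.val_injective r).trans (hR r))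
        (fun h => hP (h.of_comp Subtype.val_injective)) rfl)
    · exact coversU_of_degR_le_of_le_degU two_pos
        (two_le_degU_of_not_hasMaxUUPath hU (fun r h => hR1 ⟨r, h⟩) hP) hR

end

theorem stmt_0_general {U R : Type} [Fintype U] [Fintype R]
    (E : U → R → Bool) (hU : ∀ u, degU E u ≤ 2) (hR : ∀ r, degR E r ≤ 2) :
    CoversU E ↔ ¬ HasMaxUUPath E :=
  ⟨not_hasMaxUUPath_of_coversU hU, coversU_of_not_hasMaxUUPath hU hR⟩

/-- In a bipartite graph `B = (U ∪ R, E)` in which every vertex has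
degree at most 2, there exists a matching covering every vertex of `U` if and only if
`B` contains no maximal path that starts and ends in `U`. -/
theorem stmt_0 {U R : Type} [Fintype U] [Fintype R] [DecidableEq U] [DecidableEq R]
    (E : U → R → Bool) (hU : ∀ u, degU E u ≤ 2) (hR : ∀ r, degR E r ≤ 2) :
    CoversU E ↔ ¬ HasMaxUUPath E :=
  stmt_0_general E hU hR
end

section
/- A binary phylogenetic network N is tree-based if and only if the bipartite graph B = (U ∪ R, E) associated to N admits a matching M with |M| = |U|, i.e., a matching covering all omnians. -/
/-- Out-degree of `v` in the digraph with arc relation `arc`. -/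
def outdeg {V : Type} [Fintype V] [DecidableEq V] (arc : V → V → Bool) (v : V) : ℕ :=
  (Finset.univ.filter fun w => arc v w = true).card

/-- In-degree of `v` in the digraph with arc relation `arc`. -/
def indeg {V : Type} [Fintype V] [DecidableEq V] (arc : V → V → Bool) (v : V) : ℕ :=
  (Finset.univ.filter fun u => arc u v = true).card

/-- A rooted binary phylogenetic network on the finite vertex type `V`:
a directed acyclic graph with a single root of indegree 0 and outdegree 1 or 2,
all other vertices being leaves (indegree 1, outdegree 0),
reticulations (indegree 2, outdegree 1) or tree-vertices (indegree 1, outdegree 2). -/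
structure BinNet (V : Type) [Fintype V] [DecidableEq V] where
  arc : V → V → Bool
  root : V
  acyclic : ∀ v, ¬ Relation.TransGen (fun a b => arc a b = true) v v
  root_indeg : indeg arc root = 0
  root_outdeg : outdeg arc root = 1 ∨ outdeg arc root = 2
  vertex_types : ∀ v, v ≠ root →
    (indeg arc v = 1 ∧ outdeg arc v = 0) ∨
    (indeg arc v = 2 ∧ outdeg arc v = 1) ∨
    (indeg arc v = 1 ∧ outdeg arc v = 2)

variable {V : Type} [Fintype V] [DecidableEq V]

/-- A leaf of the network. -/
def BinNet.IsLeaf (N : BinNet V) (v : V) : Prop := outdeg N.arc v = 0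

/-- A reticulation of the network. -/
def BinNet.IsRetic (N : BinNet V) (v : V) : Prop := indeg N.arc v = 2

/-- A tree-vertex of the network. -/
def BinNet.IsTreeVertex (N : BinNet V) (v : V) : Prop :=
  v ≠ N.root ∧ indeg N.arc v = 1 ∧ outdeg N.arc v = 2

/-- An omnian: a non-leaf vertex all of whose children are reticulations. -/
def BinNet.IsOmnian (N : BinNet V) (v : V) : Prop :=
  outdeg N.arc v ≠ 0 ∧ ∀ w, N.arc v w = true → N.IsRetic w

/-- `T` is a rooted spanning tree of `N` (using a subset of the arcs of `N`,
every non-root vertex having exactly one incoming tree arc). -/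
def BinNet.IsSpanningTree (N : BinNet V) (T : V → V → Bool) : Prop :=
  (∀ u v, T u v = true → N.arc u v = true) ∧
  (∀ u, T u N.root = false) ∧
  (∀ v, v ≠ N.root → indeg T v = 1)

/-- `N` is tree-based: it has a rooted spanning tree without dummy leaves,
i.e. every leaf of the spanning tree is a leaf of `N`. -/
def BinNet.TreeBased (N : BinNet V) : Prop :=
  ∃ T, N.IsSpanningTree T ∧ ∀ v, outdeg T v = 0 → outdeg N.arc v = 0

/-- A binary phylogenetic network `N` is tree-based if and only if the
bipartite graph associated to `N` (with parts the omnians and the reticulations, and an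
edge for each arc from an omnian to a reticulation) admits a matching covering all
omnians, i.e. an injective assignment of a reticulation child to each omnian. -/
theorem stmt_3 {V : Type} [Fintype V] [DecidableEq V] (N : BinNet V) :
    N.TreeBased ↔
      ∃ m : V → V, Set.InjOn m {v | N.IsOmnian v} ∧
        ∀ v, N.IsOmnian v → N.arc v (m v) = true ∧ N.IsRetic (m v) := by
  classical
  have hnr : ∀ u w, N.arc u w = true → w ≠ N.root := by
    intro u w h hw
    have : u ∈ Finset.univ.filter fun x => N.arc x w = true := by simp [h]
    have h0 : indeg N.arc w ≠ 0 := by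
      unfold indeg
      intro hc
      rw [Finset.card_eq_zero] at hc
      rw [hc] at this
      exact absurd this (Finset.notMem_empty u)
    rw [hw] at h0
    exact h0 N.root_indeg
  constructor
  · rintro ⟨T, ⟨hsub, hroot, hindeg⟩, hnd⟩
    have key : ∀ v, N.IsOmnian v → ∃ w, T v w = true := by
      intro v hv
      have h0 : outdeg T v ≠ 0 := fun h => hv.1 (hnd v h)
      have hne : ((Finset.univ.filter fun w => T v w = true)).Nonempty := by
        rw [← Finset.card_pos]; exact Nat.pos_of_ne_zero h0
      obtain ⟨w, hw⟩ := hne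
      exact ⟨w, (Finset.mem_filter.mp hw).2⟩
    set m : V → V := fun v => if h : ∃ w, T v w = true then h.choose else v with hmdef
    have hmT : ∀ v, N.IsOmnian v → T v (m v) = true := by
      intro v hv
      have h := key v hv
      simp only [hmdef, dif_pos h]
      exact h.choose_spec
    refine ⟨m, ?_, ?_⟩
    · intro v1 h1 v2 h2 heq
      have t1 := hmT v1 h1
      have t2 := hmT v2 h2
      rw [heq] at t1
      have hne : m v2 ≠ N.root := by
        intro h; rw [h] at t2; rw [hroot v2] at t2; exact Bool.false_ne_true t2
      have hc := hindeg (m v2) hne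
      unfold indeg at hc
      have m1 : v1 ∈ Finset.univ.filter fun u => T u (m v2) = true := by simp [t1]
      have m2 : v2 ∈ Finset.univ.filter fun u => T u (m v2) = true := by simp [t2]
      exact Finset.card_le_one.mp hc.le _ m1 _ m2
    · intro v hv
      have t := hmT v hv
      have a := hsub _ _ t
      exact ⟨a, hv.2 _ a⟩
  · rintro ⟨m, hinj, hm⟩
    have hp : ∀ w, ∃ u, w ≠ N.root →
        (N.arc u w = true ∧ ((∃ v, N.IsOmnian v ∧ m v = w) → N.IsOmnian u ∧ m u = w)) := by
      intro w
      by_cases hw : w = N.root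
      · exact ⟨w, fun h => absurd hw h⟩
      by_cases h : ∃ v, N.IsOmnian v ∧ m v = w
      · obtain ⟨v, hv, hmv⟩ := h
        refine ⟨v, fun _ => ⟨?_, fun _ => ⟨hv, hmv⟩⟩⟩
        have := (hm v hv).1; rwa [hmv] at this
      · have h1 : indeg N.arc w ≠ 0 := by
          rcases N.vertex_types w hw with h' | h' | h' <;> omega
        have hne : (Finset.univ.filter fun u => N.arc u w = true).Nonempty := by
          rw [← Finset.card_pos]; exact Nat.pos_of_ne_zero h1
        obtain ⟨u, hu⟩ := hne
        exact ⟨u, fun _ => ⟨(Finset.mem_filter.mp hu).2, fun hc => absurd hc h⟩⟩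
    choose p hp using hp
    refine ⟨fun u w => decide (w ≠ N.root ∧ u = p w), ⟨?_, ?_, ?_⟩, ?_⟩
    · intro u v h
      rw [decide_eq_true_iff] at h
      obtain ⟨hv, rfl⟩ := h
      exact (hp v hv).1
    · intro u; simp
    · intro v hv
      unfold indeg
      have hfil : (Finset.univ.filter fun u => decide (v ≠ N.root ∧ u = p v) = true) = {p v} := by
        ext u; simp [hv]
      rw [hfil, Finset.card_singleton]
    · intro v hTv
      by_contra hN
      -- find a child w of v that T keeps
      have hw : ∃ w, N.arc v w = true ∧ v = p w := by
        by_cases homn : N.IsOmnian v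
        · refine ⟨m v, (hm v homn).1, ?_⟩
          have hwr : m v ≠ N.root := hnr v (m v) (hm v homn).1
          have hpw := (hp (m v) hwr).2 ⟨v, homn, rfl⟩
          exact (hinj hpw.1 homn hpw.2).symm
        · -- v has a non-reticulation child w, which has indegree 1
          have hex : ∃ w, N.arc v w = true ∧ ¬ N.IsRetic w := by
            by_contra hc
            push_neg at hc
            exact homn ⟨hN, hc⟩
          obtain ⟨w, haw, hret⟩ := hex
          have hwr : w ≠ N.root := hnr v w haw
          have hd1 : indeg N.arc w = 1 := by
            rcases N.vertex_types w hwr with h' | h' | h' <;>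
              first | exact h'.1 | (exact absurd h'.1 hret)
          refine ⟨w, haw, ?_⟩
          have m1 : v ∈ Finset.univ.filter fun u => N.arc u w = true := by simp [haw]
          have m2 : p w ∈ Finset.univ.filter fun u => N.arc u w = true := by
            simp [(hp w hwr).1]
          unfold indeg at hd1
          exact Finset.card_le_one.mp hd1.le _ m1 _ m2
      obtain ⟨w, haw, hpv⟩ := hw
      have hwr : w ≠ N.root := hnr v w haw
      have hT : decide (w ≠ N.root ∧ v = p w) = true := by
        rw [decide_eq_true_iff]; exact ⟨hwr, hpv⟩
      unfold outdeg at hTv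
      rw [Finset.card_eq_zero] at hTv
      have : w ∈ Finset.univ.filter fun x => decide (x ≠ N.root ∧ v = p x) = true := by
        simp only [Finset.mem_filter, Finset.mem_univ, true_and]
        exact hT
      rw [hTv] at this
      exact absurd this (Finset.notMem_empty w)
end

section
/- A binary phylogenetic network N is tree-based if and only if for every subset S of the set U of omnians of N, the number of distinct children (in N) of vertices in S is at least |S|. -/
variable {V : Type} [Fintype V] [DecidableEq V]

section Aux
variable {V : Type} [Fintype V] [DecidableEq V]

lemma BinNet.child_ne_root (N : BinNet V) {u w : V} (h : N.arc u w = true) : w ≠ N.root := by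
  intro hw; subst hw
  have h0 := N.root_indeg
  unfold indeg at h0
  rw [Finset.card_eq_zero] at h0
  have : u ∈ (Finset.univ.filter fun x => N.arc x N.root = true) := by
    simp [h]
  rw [h0] at this
  exact absurd this (Finset.notMem_empty u)

lemma BinNet.parent_unique (N : BinNet V) {u u' w : V} (h1 : indeg N.arc w = 1)
    (hu : N.arc u w = true) (hu' : N.arc u' w = true) : u = u' := by
  have := Finset.card_le_one.mp (le_of_eq h1)
  exact this u (by simp [hu]) u' (by simp [hu'])

lemma BinNet.exists_parent (N : BinNet V) {w : V} (hw : w ≠ N.root) :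
    ∃ u, N.arc u w = true := by
  have hpos : 0 < indeg N.arc w := by
    rcases N.vertex_types w hw with ⟨h1, _⟩ | ⟨h1, _⟩ | ⟨h1, _⟩ <;> omega
  obtain ⟨u, hu⟩ := Finset.card_pos.mp hpos
  exact ⟨u, (Finset.mem_filter.mp hu).2⟩

lemma BinNet.indeg_one_of_not_retic (N : BinNet V) {w : V} (hw : w ≠ N.root)
    (h : ¬ N.IsRetic w) : indeg N.arc w = 1 := by
  rcases N.vertex_types w hw with ⟨h1, _⟩ | ⟨h1, _⟩ | ⟨h1, _⟩
  · exact h1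
  · exact absurd h1 h
  · exact h1

end Aux

/-- A binary phylogenetic network `N` is tree-based if and only if for
every subset `S` of the set of omnians of `N`, the number of distinct children (in `N`)
of vertices in `S` is at least `|S|`. -/
theorem stmt_4 {V : Type} [Fintype V] [DecidableEq V] (N : BinNet V) :
    N.TreeBased ↔
      ∀ S : Finset V, (∀ v ∈ S, N.IsOmnian v) →
        S.card ≤ (S.biUnion fun v => Finset.univ.filter fun w => N.arc v w = true).card := by
  classical
  constructor
  · -- Forward: tree-based implies Hall condition
    rintro ⟨T, ⟨hsub, hroot, hindegT⟩, hleaf⟩ S hS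
    -- pick a tree-child for each vertex
    let g : V → V := fun v => if h : ∃ w, T v w = true then h.choose else v
    have hg : ∀ v ∈ S, T v (g v) = true := by
      intro v hv
      have hout : outdeg T v ≠ 0 := by
        intro h0
        exact (hS v hv).1 (hleaf v h0)
      have hne : ∃ w, T v w = true := by
        have : 0 < outdeg T v := Nat.pos_of_ne_zero hout
        obtain ⟨w, hw⟩ := Finset.card_pos.mp this
        exact ⟨w, (Finset.mem_filter.mp hw).2⟩
      simp only [g, dif_pos hne]
      exact hne.choose_spec
    apply Finset.card_le_card_of_injOn g
    · intro v hv
      refine Finset.mem_biUnion.mpr ⟨v, hv, ?_⟩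
      simp [hsub _ _ (hg v hv)]
    · intro v hv u hu heq
      have h1 : T v (g v) = true := hg v hv
      have h2 : T u (g v) = true := heq ▸ hg u hu
      have harc : N.arc v (g v) = true := hsub _ _ h1
      have hretic : N.IsRetic (g v) := (hS v hv).2 _ harc
      have hne : g v ≠ N.root := N.child_ne_root harc
      have hone := hindegT _ hne
      have := Finset.card_le_one.mp (le_of_eq hone)
      exact this v (by simp [h1]) u (by simp [h2])
  · -- Backward: Hall condition implies tree-based
    intro H
    -- Hall's marriage theorem on omnians
    have hall : ∀ s : Finset {v : V // N.IsOmnian v},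
        s.card ≤ (s.biUnion fun v =>
          Finset.univ.filter fun w => N.arc v.val w = true).card := by
      intro s
      have h1 : (s.image Subtype.val).card = s.card :=
        Finset.card_image_of_injective _ Subtype.val_injective
      have h2 := H (s.image Subtype.val) (by
        intro v hv
        obtain ⟨x, _, rfl⟩ := Finset.mem_image.mp hv
        exact x.2)
      rw [h1] at h2
      rwa [Finset.image_biUnion] at h2
    obtain ⟨f, finj, hf⟩ :=
      (Finset.all_card_le_biUnion_card_iff_existsInjective'
        (fun v : {v : V // N.IsOmnian v} =>
          Finset.univ.filter fun w => N.arc v.val w = true)).mp hall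
    have f_arc : ∀ v : {v : V // N.IsOmnian v}, N.arc v.val (f v) = true := by
      intro v
      have := hf v
      simp only [Finset.mem_filter] at this
      exact this.2
    -- parent choice function
    let p : V → V := fun w =>
      if h : ∃ v : {v : V // N.IsOmnian v}, f v = w then (h.choose).val
      else if h2 : ∃ u, N.arc u w = true then h2.choose else w
    have p_arc : ∀ w : V, w ≠ N.root → N.arc (p w) w = true := by
      intro w hw
      by_cases h : ∃ v : {v : V // N.IsOmnian v}, f v = w
      · simp only [p, dif_pos h]
        have := f_arc h.choose
        rwa [h.choose_spec] at this
      · have h2 : ∃ u, N.arc u w = true := N.exists_parent hw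
        simp only [p, dif_neg h, dif_pos h2]
        exact h2.choose_spec
    have p_f : ∀ v : {v : V // N.IsOmnian v}, p (f v) = v.val := by
      intro v
      have h : ∃ v' : {v : V // N.IsOmnian v}, f v' = f v := ⟨v, rfl⟩
      simp only [p, dif_pos h]
      have := h.choose_spec
      have : h.choose = v := finj this
      rw [this]
    have p_uniq : ∀ {u w : V}, w ≠ N.root → indeg N.arc w = 1 →
        N.arc u w = true → p w = u := by
      intro u w hw h1 hu
      exact N.parent_unique h1 (p_arc w hw) hu
    -- the spanning tree
    let T : V → V → Bool := fun u w => decide (w ≠ N.root ∧ p w = u)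
    have hT : ∀ u w, T u w = true ↔ (w ≠ N.root ∧ p w = u) := by
      intro u w; simp [T]
    refine ⟨T, ⟨?_, ?_, ?_⟩, ?_⟩
    · intro u w h
      obtain ⟨hw, hp⟩ := (hT u w).mp h
      exact hp ▸ p_arc w hw
    · intro u
      have : ¬ (N.root ≠ N.root ∧ p N.root = u) := by simp
      simp [T]
    · intro w hw
      unfold indeg
      rw [Finset.card_eq_one]
      refine ⟨p w, ?_⟩
      ext u
      simp only [Finset.mem_filter, Finset.mem_univ, true_and, Finset.mem_singleton, hT]
      constructor
      · rintro ⟨_, h⟩; exact h.symm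
      · rintro rfl; exact ⟨hw, rfl⟩
    · -- no dummy leaves
      intro v hv
      by_contra hout
      -- v is not a leaf of N, find a tree-child of v, contradiction
      have key : ∃ w, T v w = true := by
        by_cases hom : N.IsOmnian v
        · refine ⟨f ⟨v, hom⟩, (hT _ _).mpr ⟨?_, ?_⟩⟩
          · exact N.child_ne_root (f_arc ⟨v, hom⟩)
          · exact p_f ⟨v, hom⟩
        · have : ∃ w, N.arc v w = true ∧ ¬ N.IsRetic w := by
            by_contra hcon
            push_neg at hcon
            exact hom ⟨hout, fun w hw => hcon w hw⟩
          obtain ⟨w, hw, hnr⟩ := this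
          have hwr : w ≠ N.root := N.child_ne_root hw
          have h1 : indeg N.arc w = 1 := N.indeg_one_of_not_retic hwr hnr
          exact ⟨w, (hT _ _).mpr ⟨hwr, p_uniq hwr h1 hw⟩⟩
      obtain ⟨w, hw⟩ := key
      have : w ∈ Finset.univ.filter fun x => T v x = true := by simp [hw]
      unfold outdeg at hv
      rw [Finset.card_eq_zero] at hv
      rw [hv] at this
      exact absurd this (Finset.notMem_empty w)
end

section
/- If a binary phylogenetic network N has a reticulation both of whose parents are reticulations, then N is not tree-based. -/
variable {V : Type} [Fintype V] [DecidableEq V]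

/-- If a binary phylogenetic network `N` has a reticulation both of
whose parents are reticulations, then `N` is not tree-based. -/
theorem stmt_6 {V : Type} [Fintype V] [DecidableEq V] (N : BinNet V)
    (h : ∃ r, N.IsRetic r ∧ ∀ p, N.arc p r = true → N.IsRetic p) :
    ¬ N.TreeBased := by
  rintro ⟨T, ⟨hsub, _, hindeg⟩, hleaf⟩
  obtain ⟨r, hr, hpar⟩ := h
  -- r is not the root
  have hrne : r ≠ N.root := by
    intro he
    rw [he] at hr
    simp [BinNet.IsRetic, N.root_indeg] at hr
  -- T-parents of r form a subset of N-parents of r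
  set A := Finset.univ.filter (fun u => N.arc u r = true) with hA
  set B := Finset.univ.filter (fun u => T u r = true) with hB
  have hBA : B ⊆ A := by
    intro u hu
    simp only [hA, hB, Finset.mem_filter, Finset.mem_univ, true_and] at *
    exact hsub u r hu
  have hAcard : A.card = 2 := hr
  have hBcard : B.card = 1 := hindeg r hrne
  have hns : ¬ A ⊆ B := fun hs => absurd (Finset.card_le_card hs) (by omega)
  obtain ⟨p, hpA, hpB⟩ := Finset.not_subset.mp hns
  have hpArc : N.arc p r = true := by
    simpa [hA] using hpA
  have hpT : T p r = false := by
    by_contra hc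
    exact hpB (by simp only [hB, Finset.mem_filter, Finset.mem_univ, true_and]; exact Bool.of_not_eq_false hc)
  -- p is a reticulation, hence not root, hence outdeg 1
  have hpRet : N.IsRetic p := hpar p hpArc
  have hpne : p ≠ N.root := by
    intro he
    rw [he] at hpRet
    simp [BinNet.IsRetic, N.root_indeg] at hpRet
  have hpout : outdeg N.arc p = 1 := by
    rcases N.vertex_types p hpne with ⟨h1, _⟩ | ⟨_, h2⟩ | ⟨h1, _⟩
    · exact absurd (hpRet.symm.trans h1) (by norm_num)
    · exact h2
    · exact absurd (hpRet.symm.trans h1) (by norm_num)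
  -- the unique child of p is r
  have hfil : Finset.univ.filter (fun w => N.arc p w = true) = {r} := by
    obtain ⟨a, ha⟩ := Finset.card_eq_one.mp hpout
    have : r ∈ Finset.univ.filter (fun w => N.arc p w = true) := by simp [hpArc]
    rw [ha] at this
    rw [ha, Finset.mem_singleton.mp this]
  -- p has outdegree 0 in T
  have hpTout : outdeg T p = 0 := by
    rw [outdeg, Finset.card_eq_zero]
    ext w
    simp only [Finset.mem_filter, Finset.mem_univ, true_and, Finset.notMem_empty, iff_false]
    intro hw
    have : N.arc p w = true := hsub p w hw
    have : w ∈ Finset.univ.filter (fun w => N.arc p w = true) := by simp [this]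
    rw [hfil, Finset.mem_singleton] at this
    rw [this] at hw
    rw [hw] at hpT
    simp at hpT
  have := hleaf p hpTout
  omega
end

section
/- If in a binary phylogenetic network N both parents of every reticulation are tree-vertices, then N is tree-based. -/
variable {V : Type} [Fintype V] [DecidableEq V]

/-! A spanning tree of `N` is obtained by keeping every arc into a non-reticulation and, for each
reticulation, one arc from a chosen parent; it has no dummy leaves as soon as every omnian is the
chosen parent of one of its (reticulate) children. Such a choice exists when both parents of every
reticulation are tree-vertices: then every omnian has exactly two children and every vertex at most
two parents, so Hall's condition for matching omnians to children holds by double counting. -/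

namespace Finset

theorem exists_injective_of_le_card_of_card_filter_le {ι α : Type*} [Fintype ι] [DecidableEq α]
    (t : ι → Finset α) {d : ℕ} (hd : 0 < d) (hleft : ∀ i, d ≤ (t i).card)
    (hright : ∀ a, (univ.filter fun i => a ∈ t i).card ≤ d) :
    ∃ f : ι → α, Function.Injective f ∧ ∀ i, f i ∈ t i := by
  refine (all_card_le_biUnion_card_iff_exists_injective t).mp fun s => ?_
  refine le_of_mul_le_mul_right (card_mul_le_card_mul (fun i a => a ∈ t i) ?_ ?_) hd
  · intro i hi
    rw [bipartiteAbove, filter_mem_eq_inter, inter_eq_right.mpr (subset_biUnion_of_mem t hi)]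
    exact hleft i
  · intro a _
    exact (card_le_card (filter_subset_filter _ (subset_univ s))).trans (hright a)

end Finset

namespace BinNet

variable (N : BinNet V)

def children (v : V) : Finset V := Finset.univ.filter fun w => N.arc v w = true

theorem mem_children {u v : V} : v ∈ N.children u ↔ N.arc u v = true := by
  simp [children]

theorem arc_root_eq_false (u : V) : N.arc u N.root = false := by
  have h := N.root_indeg
  rw [indeg, Finset.card_eq_zero, Finset.filter_eq_empty_iff] at h
  simpa using h (Finset.mem_univ u)

theorem indeg_le_two (v : V) : indeg N.arc v ≤ 2 := by
  by_cases hv : v = N.root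
  · simp [hv, N.root_indeg]
  · rcases N.vertex_types v hv with h | h | h <;> omega

theorem exists_parent_of_isRetic {r : V} (hr : N.IsRetic r) : ∃ u, N.arc u r = true := by
  have : 0 < indeg N.arc r := hr ▸ two_pos
  obtain ⟨u, hu⟩ := Finset.card_pos.mp this
  exact ⟨u, (Finset.mem_filter.mp hu).2⟩

theorem outdeg_eq_two_of_isOmnian
    (h : ∀ r, N.IsRetic r → ∀ p, N.arc p r = true → N.IsTreeVertex p)
    {v : V} (hv : N.IsOmnian v) : outdeg N.arc v = 2 := by
  obtain ⟨w, hw⟩ : (N.children v).Nonempty := Finset.card_pos.mp (Nat.pos_of_ne_zero hv.1)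
  rw [mem_children] at hw
  exact (h w (hv.2 w hw) v hw).2.2

theorem exists_injective_omnian_to_child
    (h : ∀ r, N.IsRetic r → ∀ p, N.arc p r = true → N.IsTreeVertex p) :
    ∃ f : {v // N.IsOmnian v} → V, Function.Injective f ∧ ∀ v : {v // N.IsOmnian v}, N.arc v (f v) = true := by
  classical
  obtain ⟨f, hf, hft⟩ := Finset.exists_injective_of_le_card_of_card_filter_le
    (fun v : {v // N.IsOmnian v} => N.children v) two_pos
    (fun v => (N.outdeg_eq_two_of_isOmnian h v.2).ge)
    (fun r => le_trans (Finset.card_le_card_of_injOn Subtype.val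
      (fun v hv => by simpa [mem_children] using hv) Subtype.val_injective.injOn)
      (N.indeg_le_two r))
  exact ⟨f, hf, fun v => N.mem_children.mp (hft v)⟩

noncomputable def treeOfParentChoice (p : V → V) : V → V → Bool := by
  classical
  exact fun u v => decide (N.arc u v = true ∧ (N.IsRetic v → p v = u))

theorem treeOfParentChoice_eq_true {p : V → V} {u v : V} :
    N.treeOfParentChoice p u v = true ↔ N.arc u v = true ∧ (N.IsRetic v → p v = u) := by
  simp [treeOfParentChoice]

theorem isSpanningTree_treeOfParentChoice {p : V → V}
    (hp : ∀ r, N.IsRetic r → N.arc (p r) r = true) :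
    N.IsSpanningTree (N.treeOfParentChoice p) := by
  refine ⟨fun u v huv => (N.treeOfParentChoice_eq_true.mp huv).1, fun u => ?_, fun v hv => ?_⟩
  · simp [treeOfParentChoice, arc_root_eq_false]
  by_cases hr : N.IsRetic v
  · have : (Finset.univ.filter fun u => N.treeOfParentChoice p u v = true) = {p v} := by
      ext u
      simp only [Finset.mem_filter, Finset.mem_univ, true_and, Finset.mem_singleton,
        treeOfParentChoice_eq_true]
      exact ⟨fun huv => (huv.2 hr).symm, by rintro rfl; exact ⟨hp v hr, fun _ => rfl⟩⟩
    rw [indeg, this, Finset.card_singleton]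
  · have : (Finset.univ.filter fun u => N.treeOfParentChoice p u v = true)
        = Finset.univ.filter fun u => N.arc u v = true := by
      ext u
      simp [treeOfParentChoice_eq_true, hr]
    rw [indeg, this]
    rcases N.vertex_types v hv with h | h | h
    exacts [h.1, absurd h.1 hr, h.1]

theorem treeBased_of_parentChoice {p : V → V} (hp : ∀ r, N.IsRetic r → N.arc (p r) r = true)
    (homn : ∀ v, N.IsOmnian v → ∃ r, N.arc v r = true ∧ p r = v) : N.TreeBased := by
  refine ⟨_, N.isSpanningTree_treeOfParentChoice hp, fun v hleaf => ?_⟩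
  rw [outdeg, Finset.card_eq_zero, Finset.filter_eq_empty_iff] at hleaf
  have hnochild : ∀ w, N.arc v w = true → N.IsRetic w → p w ≠ v := fun w hw hr hpw =>
    hleaf (Finset.mem_univ w) (N.treeOfParentChoice_eq_true.mpr ⟨hw, fun _ => hpw⟩)
  by_contra hv
  by_cases hvo : N.IsOmnian v
  · obtain ⟨r, hr, hpr⟩ := homn v hvo
    exact hnochild r hr (hvo.2 r hr) hpr
  · obtain ⟨w, hw, hwr⟩ : ∃ w, N.arc v w = true ∧ ¬N.IsRetic w := by
      simpa [IsOmnian, hv] using hvo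
    exact hleaf (Finset.mem_univ w) (N.treeOfParentChoice_eq_true.mpr ⟨hw, fun h => absurd h hwr⟩)

theorem exists_parentChoice_of_injective {f : {v // N.IsOmnian v} → V}
    (hf : Function.Injective f) (hfarc : ∀ v : {v // N.IsOmnian v}, N.arc v (f v) = true) :
    ∃ p : V → V, (∀ r, N.IsRetic r → N.arc (p r) r = true) ∧
      ∀ v, N.IsOmnian v → ∃ r, N.arc v r = true ∧ p r = v := by
  classical
  have hq : ∀ r, ∃ u, N.IsRetic r → N.arc u r = true := fun r =>
    if hr : N.IsRetic r then (N.exists_parent_of_isRetic hr).imp fun _ hu _ => hu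
    else ⟨r, fun h => absurd h hr⟩
  choose q hq using hq
  refine ⟨Function.extend f Subtype.val q, fun r hr => ?_, fun v hv => ⟨f ⟨v, hv⟩, hfarc ⟨v, hv⟩, ?_⟩⟩
  · by_cases hrf : ∃ v, f v = r
    · obtain ⟨v, rfl⟩ := hrf
      rw [hf.extend_apply]
      exact hfarc v
    · rw [Function.extend_apply' _ _ _ hrf]
      exact hq r hr
  · exact hf.extend_apply _ _ _

end BinNet

/-- If in a binary phylogenetic network `N` both parents of every
reticulation are tree-vertices, then `N` is tree-based. -/
theorem stmt_7 {V : Type} [Fintype V] [DecidableEq V] (N : BinNet V)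
    (h : ∀ r, N.IsRetic r → ∀ p, N.arc p r = true → N.IsTreeVertex p) :
    N.TreeBased := by
  obtain ⟨f, hf, hfarc⟩ := N.exists_injective_omnian_to_child h
  obtain ⟨p, hp, homn⟩ := N.exists_parentChoice_of_injective hf hfarc
  exact N.treeBased_of_parentChoice hp homn
end

section
/- There exists a stable nonbinary phylogenetic network, in which all parents of all reticulations are tree-vertices, that is not tree-based. (Witness: the network with root ρ having three tree-vertex children t₁, t₂, t₃, each t_i having both reticulations r₁ and r₂ as its children, and each r_j having a single leaf child.) -/
/-- A rooted nonbinary phylogenetic network on the finite vertex type `V`: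
a directed acyclic graph with a single root of indegree 0 and outdegree ≥ 1,
all other vertices being leaves (indegree 1, outdegree 0),
reticulations (indegree ≥ 2, outdegree 1) or tree-vertices (indegree 1, outdegree ≥ 2). -/
structure NBNet (V : Type) [Fintype V] [DecidableEq V] where
  arc : V → V → Bool
  root : V
  acyclic : ∀ v, ¬ Relation.TransGen (fun a b => arc a b = true) v v
  root_indeg : indeg arc root = 0
  root_outdeg : 1 ≤ outdeg arc root
  vertex_types : ∀ v, v ≠ root →
    (indeg arc v = 1 ∧ outdeg arc v = 0) ∨
    (2 ≤ indeg arc v ∧ outdeg arc v = 1) ∨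
    (indeg arc v = 1 ∧ 2 ≤ outdeg arc v)

variable {V : Type} [Fintype V] [DecidableEq V]

/-- A leaf of the network. -/
def NBNet.IsLeaf (N : NBNet V) (v : V) : Prop := outdeg N.arc v = 0

/-- A reticulation of the network: a vertex of indegree at least 2. -/
def NBNet.IsRetic (N : NBNet V) (v : V) : Prop := 2 ≤ indeg N.arc v

/-- A tree-vertex of the network. -/
def NBNet.IsTreeVertex (N : NBNet V) (v : V) : Prop :=
  v ≠ N.root ∧ indeg N.arc v = 1 ∧ 2 ≤ outdeg N.arc v

/-- An omnian: a non-leaf vertex all of whose children are reticulations. -/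
def NBNet.IsOmnian (N : NBNet V) (v : V) : Prop :=
  outdeg N.arc v ≠ 0 ∧ ∀ w, N.arc v w = true → N.IsRetic w

/-- `T` is a rooted spanning tree of `N` (using a subset of the arcs of `N`,
every non-root vertex having exactly one incoming tree arc). -/
def NBNet.IsSpanningTree (N : NBNet V) (T : V → V → Bool) : Prop :=
  (∀ u v, T u v = true → N.arc u v = true) ∧
  (∀ u, T u N.root = false) ∧
  (∀ v, v ≠ N.root → indeg T v = 1)

/-- `N` is tree-based: it has a rooted spanning tree without dummy leaves,
i.e. every leaf of the spanning tree is a leaf of `N`. -/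
def NBNet.TreeBased (N : NBNet V) : Prop :=
  ∃ T, N.IsSpanningTree T ∧ ∀ v, outdeg T v = 0 → outdeg N.arc v = 0

/-- A vertex `v` is stable if there is a leaf `ℓ` such that every directed path from the
root to `ℓ` passes through `v`. -/
def NBNet.StableVertex {V : Type} [Fintype V] [DecidableEq V] (N : NBNet V) (v : V) : Prop :=
  ∃ ℓ, N.IsLeaf ℓ ∧ ∀ p : List V, p.head? = some N.root → p.getLast? = some ℓ →
    p.Chain' (fun a b => N.arc a b = true) → v ∈ p

/-- The network is stable if every reticulation is stable. -/
def NBNet.Stable {V : Type} [Fintype V] [DecidableEq V] (N : NBNet V) : Prop :=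
  ∀ r, N.IsRetic r → N.StableVertex r

/-! ### Auxiliary construction: the witness network -/

/-- The arc relation of the witness network on `Fin 8`:
`0` is the root, `1,2,3` are tree-vertices, `4,5` are reticulations, `6,7` are leaves. -/
def arcW : Fin 8 → Fin 8 → Bool := fun a b =>
  (a = 0 && (b = 1 || b = 2 || b = 3)) ||
  ((a = 1 || a = 2 || a = 3) && (b = 4 || b = 5)) ||
  (a = 4 && b = 6) || (a = 5 && b = 7)

lemma arcW_lt : ∀ a b, arcW a b = true → a < b := by decide

lemma arcW_acyclic : ∀ v, ¬ Relation.TransGen (fun a b => arcW a b = true) v v := by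
  have key : ∀ a b, Relation.TransGen (fun a b => arcW a b = true) a b → a < b := by
    intro a b h
    induction h with
    | single h => exact arcW_lt _ _ h
    | tail _ h ih => exact ih.trans (arcW_lt _ _ h)
  exact fun v h => lt_irrefl v (key v v h)

/-- The witness network. -/
def NW : NBNet (Fin 8) where
  arc := arcW
  root := 0
  acyclic := arcW_acyclic
  root_indeg := by decide
  root_outdeg := by decide
  vertex_types := by decide

lemma chain_pred {α : Type*} {R : α → α → Prop} :
    ∀ (p : List α) (ℓ : α), p.Chain' R → p.getLast? = some ℓ → 2 ≤ p.length →
      ∃ x ∈ p, R x ℓ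
  | [], _, _, _, hlen => by simp at hlen
  | [_], _, _, _, hlen => by simp at hlen
  | a :: b :: rest, ℓ, hc, hl, _ => by
    cases rest with
    | nil =>
      simp [List.getLast?] at hl
      subst hl
      exact ⟨a, by simp, (List.isChain_cons_cons.mp hc).1⟩
    | cons c rest' =>
      obtain ⟨x, hx, hR⟩ := chain_pred (b :: c :: rest') ℓ hc.tail (by simpa using hl)
        (by simp)
      exact ⟨x, by simp [List.mem_cons] at hx ⊢; tauto, hR⟩

lemma two_le_card_filter {f : Fin 8 → Bool} {a b : Fin 8} (hab : a ≠ b)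
    (ha : f a = true) (hb : f b = true) :
    2 ≤ (Finset.univ.filter fun u => f u = true).card := by
  have : ({a, b} : Finset (Fin 8)) ⊆ Finset.univ.filter fun u => f u = true := by
    intro x hx
    simp only [Finset.mem_insert, Finset.mem_singleton] at hx
    rcases hx with rfl | rfl <;> simp [ha, hb]
  calc 2 = ({a, b} : Finset (Fin 8)).card := by
        rw [Finset.card_insert_of_notMem (by simpa using hab), Finset.card_singleton]
    _ ≤ _ := Finset.card_le_card this

lemma NW_stable_at (r ℓ : Fin 8) (hleaf : outdeg arcW ℓ = 0)
    (hroot : (0 : Fin 8) ≠ ℓ) (honly : ∀ x, arcW x ℓ = true → x = r) :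
    NW.StableVertex r := by
  refine ⟨ℓ, hleaf, ?_⟩
  intro p hh hl hc
  have hlen : 2 ≤ p.length := by
    match p, hh, hl with
    | [a], hh, hl =>
      simp at hh hl
      exact absurd (hh.symm.trans hl) hroot
    | a :: b :: q, _, _ => simp
  obtain ⟨x, hx, hR⟩ := chain_pred p ℓ hc hl hlen
  have := honly x hR
  subst this
  exact hx

/-- There exists a stable nonbinary phylogenetic network in which all
parents of all reticulations are tree-vertices, but which is not tree-based. -/
theorem stmt_13 :
    ∃ (V : Type) (iF : Fintype V) (iD : DecidableEq V) (N : @NBNet V iF iD),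
      @NBNet.Stable V iF iD N ∧
      (∀ r p, @NBNet.IsRetic V iF iD N r → N.arc p r = true →
        @NBNet.IsTreeVertex V iF iD N p) ∧
      ¬ @NBNet.TreeBased V iF iD N := by
  refine ⟨Fin 8, inferInstance, inferInstance, NW, ?_, ?_, ?_⟩
  · -- stable
    intro r hr
    have hr2 : 2 ≤ indeg arcW r := hr
    have hr' : r = 4 ∨ r = 5 := by clear hr; revert hr2; revert r; decide
    rcases hr' with rfl | rfl
    · exact NW_stable_at 4 6 (by decide) (by decide) (by decide)
    · exact NW_stable_at 5 7 (by decide) (by decide) (by decide)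
  · -- parents of reticulations are tree-vertices
    intro r p hr hp
    have hr2 : 2 ≤ indeg arcW r := hr
    have hp2 : arcW p r = true := hp
    have key : ∀ r p : Fin 8, arcW p r = true → 2 ≤ indeg arcW r →
        p ≠ 0 ∧ indeg arcW p = 1 ∧ 2 ≤ outdeg arcW p := by decide
    exact key r p hp2 hr2
  · -- not tree-based
    rintro ⟨T, ⟨hsub, _, hin⟩, hleaves⟩
    -- each of 1,2,3 has a T-arc to 4 or 5
    have hch : ∀ i : Fin 8, i = 1 ∨ i = 2 ∨ i = 3 →
        T i 4 = true ∨ T i 5 = true := by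
      intro i hi
      by_contra hcon
      push_neg at hcon
      have h4 : T i 4 = false := by
        cases h : T i 4 <;> simp_all
      have h5 : T i 5 = false := by
        cases h : T i 5 <;> simp_all
      have hout : outdeg T i = 0 := by
        unfold outdeg
        rw [Finset.card_eq_zero, Finset.filter_eq_empty_iff]
        intro w _
        intro hw
        have harc : arcW i w = true := hsub i w hw
        have key : ∀ i w : Fin 8, (i = 1 ∨ i = 2 ∨ i = 3) → arcW i w = true →
            w = 4 ∨ w = 5 := by decide
        have : w = 4 ∨ w = 5 := key i w hi harc
        rcases this with rfl | rfl
        · rw [h4] at hw; exact absurd hw (by simp)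
        · rw [h5] at hw; exact absurd hw (by simp)
      have hbad : outdeg NW.arc i = 0 := hleaves i hout
      have hbad2 : outdeg arcW i = 0 := hbad
      rcases hi with rfl | rfl | rfl <;> exact absurd hbad2 (by decide)
    have nodup : ∀ (a b : Fin 8) (r : Fin 8), a ≠ b → r ≠ 0 →
        T a r = true → T b r = true → False := by
      intro a b r hab hr ha hb
      have h1 : indeg T r = 1 := hin r hr
      have h2 : 2 ≤ indeg T r := two_le_card_filter hab ha hb
      omega
    have h1 := hch 1 (by tauto)
    have h2 := hch 2 (by tauto)
    have h3 := hch 3 (by tauto)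
    rcases h1 with h1 | h1 <;> rcases h2 with h2 | h2 <;> rcases h3 with h3 | h3
    · exact nodup 1 2 4 (by decide) (by decide) h1 h2
    · exact nodup 1 2 4 (by decide) (by decide) h1 h2
    · exact nodup 1 3 4 (by decide) (by decide) h1 h3
    · exact nodup 2 3 5 (by decide) (by decide) h2 h3
    · exact nodup 2 3 4 (by decide) (by decide) h2 h3
    · exact nodup 1 3 5 (by decide) (by decide) h1 h3
    · exact nodup 1 2 5 (by decide) (by decide) h1 h2
    · exact nodup 1 2 5 (by decide) (by decide) h1 h2
end

section
/- A nonbinary phylogenetic network N is tree-based if and only if the bipartite graph B = (U ∪ R, E) associated to N has a matching M with |M| = |U|. -/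
variable {V : Type} [Fintype V] [DecidableEq V]

/-- A nonbinary phylogenetic network `N` is tree-based if and only if
the bipartite graph associated to `N` (parts: omnians and reticulations, edges: arcs
from omnians to reticulations) has a matching covering all omnians. -/
theorem stmt_14 {V : Type} [Fintype V] [DecidableEq V] (N : NBNet V) :
    N.TreeBased ↔
      ∃ m : V → V, Set.InjOn m {v | N.IsOmnian v} ∧
        ∀ v, N.IsOmnian v → N.arc v (m v) = true ∧ N.IsRetic (m v) := by
  classical
  have hparent : ∀ w, w ≠ N.root → ∃ u, N.arc u w = true := by
    intro w hw
    have h1 : 1 ≤ indeg N.arc w := by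
      rcases N.vertex_types w hw with h | h | h <;> omega
    rw [indeg, Finset.one_le_card] at h1
    obtain ⟨u, hu⟩ := h1
    exact ⟨u, (Finset.mem_filter.mp hu).2⟩
  have hne_root : ∀ u w, N.arc u w = true → w ≠ N.root := by
    intro u w h e
    subst e
    have h0 := N.root_indeg
    rw [indeg, Finset.card_eq_zero] at h0
    have : u ∈ Finset.univ.filter (fun u => N.arc u N.root = true) := by
      simp [h]
    rw [h0] at this
    exact absurd this (Finset.notMem_empty u)
  constructor
  · rintro ⟨T, ⟨hsub, hroot, hind⟩, hnd⟩
    set m : V → V := fun v => if h : ∃ w, T v w = true then h.choose else v with hm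
    have key : ∀ v, N.IsOmnian v → T v (m v) = true := by
      intro v hv
      have hTv : outdeg T v ≠ 0 := fun h0 => hv.1 (hnd v h0)
      rw [outdeg] at hTv
      obtain ⟨w, hw⟩ := Finset.card_pos.mp (Nat.pos_of_ne_zero hTv)
      have hex : ∃ w, T v w = true := ⟨w, (Finset.mem_filter.mp hw).2⟩
      simp only [hm, dif_pos hex]
      exact hex.choose_spec
    refine ⟨m, ?_, ?_⟩
    · intro v hv v' hv' he
      have h1 := key v hv
      have h2 := key v' hv'
      rw [he] at h1
      have hmr : m v' ≠ N.root := by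
        intro e; rw [e, hroot v'] at h2; exact absurd h2 (by simp)
      have hcard := hind (m v') hmr
      rw [indeg] at hcard
      have := Finset.card_le_one.mp (le_of_eq hcard)
      exact this v (by simp [h1]) v' (by simp [h2])
    · intro v hv
      have h1 := key v hv
      have harc := hsub v (m v) h1
      exact ⟨harc, hv.2 (m v) harc⟩
  · rintro ⟨m, hinj, hmat⟩
    set p : V → V := fun w =>
      if h : ∃ v, N.IsOmnian v ∧ m v = w then h.choose
      else if h2 : ∃ u, N.arc u w = true then h2.choose else w with hp
    have harcp : ∀ w, w ≠ N.root → N.arc (p w) w = true := by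
      intro w hw
      by_cases h : ∃ v, N.IsOmnian v ∧ m v = w
      · simp only [hp, dif_pos h]
        have hs := h.choose_spec
        have := (hmat _ hs.1).1
        rwa [hs.2] at this
      · simp only [hp, dif_neg h, dif_pos (hparent w hw)]
        exact (hparent w hw).choose_spec
    set T : V → V → Bool := fun u w => decide (w ≠ N.root ∧ u = p w) with hT
    have hTiff : ∀ u w, T u w = true ↔ (w ≠ N.root ∧ u = p w) := by
      intro u w; simp [hT]
    have hTarc : ∀ v w, T v w = true → v = p w ∧ N.arc v w = true := by
      intro v w h
      obtain ⟨hw, rfl⟩ := (hTiff v w).mp h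
      exact ⟨rfl, harcp w hw⟩
    refine ⟨T, ⟨fun u w h => (hTarc u w h).2, ?_, ?_⟩, ?_⟩
    · intro u
      by_contra h
      rw [Bool.not_eq_false, hTiff] at h
      exact h.1 rfl
    · intro w hw
      rw [indeg]
      have : Finset.univ.filter (fun u => T u w = true) = {p w} := by
        ext u
        simp [hTiff, hw]
      rw [this, Finset.card_singleton]
    · intro v hv
      by_contra hN
      rw [outdeg, Finset.card_eq_zero, Finset.filter_eq_empty_iff] at hv
      by_cases hv' : N.IsOmnian v
      · -- v is an omnian: matched to m v, so T v (m v) = true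
        have hret := (hmat v hv').2
        have hwroot : m v ≠ N.root := by
          intro e
          have := N.root_indeg
          rw [NBNet.IsRetic, e] at hret
          omega
        have hex : ∃ v', N.IsOmnian v' ∧ m v' = m v := ⟨v, hv', rfl⟩
        have hpw : p (m v) = v := by
          simp only [hp, dif_pos hex]
          exact hinj hex.choose_spec.1 hv' hex.choose_spec.2
        have : T v (m v) = true := (hTiff v (m v)).mpr ⟨hwroot, hpw.symm⟩
        exact absurd this (by simpa using hv (Finset.mem_univ (m v)))
      · -- v is not an omnian: it has a non-reticulation child w of indegree 1
        rw [NBNet.IsOmnian, not_and_or] at hv'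
        rcases hv' with h | h
        · exact h hN
        · push_neg at h
          obtain ⟨w, harc, hnret⟩ := h
          have hwroot : w ≠ N.root := hne_root v w harc
          have hnomatch : ¬ ∃ v', N.IsOmnian v' ∧ m v' = w := by
            rintro ⟨v', hv', he⟩
            exact hnret (he ▸ (hmat v' hv').2)
          have hin1 : indeg N.arc w = 1 := by
            rcases N.vertex_types w hwroot with h | h | h
            · exact h.1
            · exact absurd h.1 hnret
            · exact h.1
          have hpw : p w = v := by
            simp only [hp, dif_neg hnomatch, dif_pos (hparent w hwroot)]
            have hspec := (hparent w hwroot).choose_spec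
            rw [indeg] at hin1
            exact Finset.card_le_one.mp (le_of_eq hin1) _ (by simp [hspec]) v (by simp [harc])
          have : T v w = true := (hTiff v w).mpr ⟨hwroot, hpw.symm⟩
          exact absurd this (by simpa using hv (Finset.mem_univ w))
end

section
/- A nonbinary phylogenetic network N is tree-based if and only if for every subset S of the set of omnians of N, the number of distinct children of the vertices in S is at least |S|. -/
variable {V : Type} [Fintype V] [DecidableEq V]

/-- A nonbinary phylogenetic network `N` is tree-based if and only if
for every subset `S` of the set of omnians of `N`, the number of distinct children of
the vertices in `S` is at least `|S|`. -/
theorem stmt_15 {V : Type} [Fintype V] [DecidableEq V] (N : NBNet V) :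
    N.TreeBased ↔
      ∀ S : Finset V, (∀ v ∈ S, N.IsOmnian v) →
        S.card ≤ (S.biUnion fun v => Finset.univ.filter fun w => N.arc v w = true).card := by
  classical
  have hnr : ∀ u, N.arc u N.root ≠ true := by
    intro u hu
    have h0 := N.root_indeg
    rw [indeg, Finset.card_eq_zero, Finset.filter_eq_empty_iff] at h0
    exact h0 (Finset.mem_univ u) hu
  constructor
  · rintro ⟨T, ⟨hsub, hroot, hindeg⟩, hleaf⟩ S hS
    have hex : ∀ v : V, ∃ w, v ∈ S → T v w = true := by
      intro v
      by_cases hv : v ∈ S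
      · by_contra h
        push_neg at h
        have h0 : outdeg T v = 0 := by
          rw [outdeg, Finset.card_eq_zero, Finset.filter_eq_empty_iff]
          intro w _ hw
          exact (h w).2 hw
        exact (hS v hv).1 (hleaf v h0)
      · exact ⟨v, fun h' => absurd h' hv⟩
    choose g hg using hex
    apply Finset.card_le_card_of_injOn g
    · intro v hv
      refine Finset.mem_biUnion.2 ⟨v, hv, Finset.mem_filter.2 ⟨Finset.mem_univ _, ?_⟩⟩
      exact hsub v (g v) (hg v hv)
    · intro v1 hv1 v2 hv2 heq
      have h1 : T v1 (g v1) = true := hg v1 hv1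
      have h2 : T v2 (g v1) = true := heq ▸ hg v2 hv2
      have hcr : g v1 ≠ N.root := by
        intro h; rw [h] at h1; rw [hroot v1] at h1; exact absurd h1 (by simp)
      obtain ⟨a, ha⟩ := Finset.card_eq_one.mp (hindeg (g v1) hcr)
      have m1 : v1 ∈ Finset.univ.filter fun u => T u (g v1) = true :=
        Finset.mem_filter.2 ⟨Finset.mem_univ _, h1⟩
      have m2 : v2 ∈ Finset.univ.filter fun u => T u (g v1) = true :=
        Finset.mem_filter.2 ⟨Finset.mem_univ _, h2⟩
      rw [ha, Finset.mem_singleton] at m1 m2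
      rw [m1, m2]
  · intro hall
    have hcond : ∀ s : Finset {v : V // N.IsOmnian v}, s.card ≤
        (s.biUnion fun i => Finset.univ.filter fun w => N.arc i.1 w = true).card := by
      intro s
      have key := hall (s.image Subtype.val) (by
        intro v hv
        obtain ⟨i, _, rfl⟩ := Finset.mem_image.mp hv
        exact i.2)
      rw [Finset.card_image_of_injective _ Subtype.val_injective] at key
      refine key.trans (le_of_eq ?_)
      congr 1
      ext w
      simp only [Finset.mem_biUnion, Finset.mem_image]
      constructor
      · rintro ⟨v, ⟨i, hi, rfl⟩, hw⟩; exact ⟨i, hi, hw⟩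
      · rintro ⟨i, hi, hw⟩; exact ⟨i.1, ⟨i, hi, rfl⟩, hw⟩
    obtain ⟨f, finj, hf⟩ := (Finset.all_card_le_biUnion_card_iff_exists_injective
        (fun i : {v : V // N.IsOmnian v} =>
          Finset.univ.filter fun w => N.arc i.1 w = true)).mp hcond
    have hchild : ∀ i : {v : V // N.IsOmnian v}, N.arc i.1 (f i) = true := by
      intro i
      have := hf i
      rw [Finset.mem_filter] at this
      exact this.2
    -- parent choice
    have hpar : ∀ v : V, v ≠ N.root → ∃ u, N.arc u v = true := by
      intro v hv
      have hd : 1 ≤ indeg N.arc v := by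
        rcases N.vertex_types v hv with ⟨h, _⟩ | ⟨h, _⟩ | ⟨h, _⟩ <;> omega
      rw [indeg] at hd
      obtain ⟨u, hu⟩ := Finset.card_pos.mp hd
      exact ⟨u, (Finset.mem_filter.mp hu).2⟩
    set p : V → V := fun v => if h : ∃ u, N.arc u v = true then h.choose else v with hpdef
    have hp : ∀ v, v ≠ N.root → N.arc (p v) v = true := by
      intro v hv
      have h := hpar v hv
      simp only [hpdef, dif_pos h]
      exact h.choose_spec
    set T : V → V → Bool := fun u v =>
      decide ((∃ i : {v : V // N.IsOmnian v}, f i = v ∧ i.1 = u) ∨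
        ((¬ ∃ i : {v : V // N.IsOmnian v}, f i = v) ∧ v ≠ N.root ∧ p v = u)) with hTdef
    have hT : ∀ u v, T u v = true ↔
        ((∃ i : {v : V // N.IsOmnian v}, f i = v ∧ i.1 = u) ∨
        ((¬ ∃ i : {v : V // N.IsOmnian v}, f i = v) ∧ v ≠ N.root ∧ p v = u)) := by
      intro u v; rw [hTdef]; exact decide_eq_true_iff
    refine ⟨T, ⟨?_, ?_, ?_⟩, ?_⟩
    · intro u v h
      rcases (hT u v).mp h with ⟨i, hfi, hiu⟩ | ⟨_, hvr, hpu⟩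
      · rw [← hfi, ← hiu]; exact hchild i
      · rw [← hpu]; exact hp v hvr
    · intro u
      rw [← Bool.not_eq_true, hT]
      rintro (⟨i, hfi, _⟩ | ⟨_, hvr, _⟩)
      · exact hnr i.1 (hfi ▸ hchild i)
      · exact hvr rfl
    · intro v hv
      rw [indeg]
      by_cases hm : ∃ i : {v : V // N.IsOmnian v}, f i = v
      · obtain ⟨i, hi⟩ := hm
        have : (Finset.univ.filter fun u => T u v = true) = {i.1} := by
          ext u
          simp only [Finset.mem_filter, Finset.mem_univ, true_and, Finset.mem_singleton, hT]
          constructor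
          · rintro (⟨j, hj, hju⟩ | ⟨hnm, _, _⟩)
            · rw [← hju]; congr 1; exact finj (hj.trans hi.symm)
            · exact absurd ⟨i, hi⟩ hnm
          · rintro rfl; exact Or.inl ⟨i, hi, rfl⟩
        rw [this, Finset.card_singleton]
      · have : (Finset.univ.filter fun u => T u v = true) = {p v} := by
          ext u
          simp only [Finset.mem_filter, Finset.mem_univ, true_and, Finset.mem_singleton, hT]
          constructor
          · rintro (⟨j, hj, _⟩ | ⟨_, _, hpu⟩)
            · exact absurd ⟨j, hj⟩ hm
            · exact hpu.symm
          · rintro rfl; exact Or.inr ⟨hm, hv, rfl⟩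
        rw [this, Finset.card_singleton]
    · intro v hT0
      by_contra houtN
      have hnoT : ∀ w, ¬ T v w = true := by
        rw [outdeg, Finset.card_eq_zero, Finset.filter_eq_empty_iff] at hT0
        intro w hw; exact hT0 (Finset.mem_univ w) hw
      by_cases hom : N.IsOmnian v
      · exact hnoT (f ⟨v, hom⟩) ((hT v (f ⟨v, hom⟩)).mpr (Or.inl ⟨⟨v, hom⟩, rfl, rfl⟩))
      · rw [NBNet.IsOmnian, not_and] at hom
        have := hom houtN
        push_neg at this
        obtain ⟨w, hvw, hwret⟩ := this
        have hwr : w ≠ N.root := fun h => hnr v (h ▸ hvw)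
        have hwnm : ¬ ∃ i : {v : V // N.IsOmnian v}, f i = w := by
          rintro ⟨i, hi⟩
          exact hwret (i.2.2 w (hi ▸ hchild i))
        have hwin : indeg N.arc w = 1 := by
          rcases N.vertex_types w hwr with ⟨h, _⟩ | ⟨h, _⟩ | ⟨h, _⟩
          · exact h
          · exact absurd h hwret
          · exact h
        have hpw : p w = v := by
          rw [indeg] at hwin
          obtain ⟨a, ha⟩ := Finset.card_eq_one.mp hwin
          have m1 : p w ∈ Finset.univ.filter fun u => N.arc u w = true :=
            Finset.mem_filter.2 ⟨Finset.mem_univ _, hp w hwr⟩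
          have m2 : v ∈ Finset.univ.filter fun u => N.arc u w = true :=
            Finset.mem_filter.2 ⟨Finset.mem_univ _, hvw⟩
          rw [ha, Finset.mem_singleton] at m1 m2
          rw [m1, m2]
        exact hnoT w ((hT v w).mpr (Or.inr ⟨hwnm, hwr, hpw⟩))
end
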